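/- Let the coin have P(H) = p with 0 < p < 1. The probability that HTH occurs before TTH equals (R_B(B) − R_B(A)) / (R_A(A) − R_A(B) + R_B(B) − R_B(A)) where A = HTH, B = TTH, R_A(A) = 1/(p²(1−p)) + 1/p, R_A(B) = 0, R_B(B) = 1/(p(1−p)²), R_B(A) = 1/p; in particular for p = 3/4 this probability is 45/64. -/

import Mathlib

/-!
Both patterns end in `TH`. Once two consecutive tails have appeared, the next head completes
`TTH`, and `HTH` cannot be completed before it. Hence `HTH` comes first exactly on the sequences
starting with `H^(a+1) T H` or `T H^(a+1) T H` for some `a`, events of probability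
`p^(a+2) (1-p)` and `p^(a+2) (1-p)^2`. Summing the geometric series gives `p^2 + p^2 (1-p)`,
which is also the value of Conway's formula.
-/

open MeasureTheory ProbabilityTheory
open scoped ENNReal

/-- The pattern `P` occurs at time `n` (i.e. within the first `n` draws
`x 0, …, x (n-1)`, as the final block of `P.length` consecutive draws). -/
def occursAt {α : Type*} (P : List α) (x : ℕ → α) (n : ℕ) : Prop :=
  P.length ≤ n ∧ ∀ i (h : i < P.length), x (n - P.length + i) = P.get ⟨i, h⟩

/-- The first time at which the pattern `P` occurs (`∞` if it never occurs). -/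
noncomputable def hitTime {α : Type*} (P : List α) (x : ℕ → α) : ℝ≥0∞ :=
  sInf ((fun n : ℕ => (n : ℝ≥0∞)) '' {n | occursAt P x n})

/-- The Bernoulli `PMF` with an `ℝ≥0∞` parameter (the old `PMF.bernoulli`). -/
noncomputable def bernoulliENNReal (p : ℝ≥0∞) (h : p ≤ 1) : PMF Bool :=
  PMF.ofFintype (fun b => cond b p (1 - p)) (by simp [h])

/-- The fair-coin distribution on `Bool` (`true` = heads `H`, `false` = tails `T`). -/
noncomputable def fairCoin : Measure Bool := (bernoulliENNReal (1/2) (by norm_num)).toMeasure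

section Patterns

variable {α : Type*}

def StartsWith (w : List α) (x : ℕ → α) : Prop :=
  ∀ i (h : i < w.length), x i = w[i]

@[simp]
lemma startsWith_nil (x : ℕ → α) : StartsWith [] x := fun _ h => absurd h (Nat.not_lt_zero _)

@[simp]
lemma startsWith_cons (b : α) (w : List α) (x : ℕ → α) :
    StartsWith (b :: w) x ↔ x 0 = b ∧ StartsWith w (fun i => x (i + 1)) := by
  constructor
  · intro h
    exact ⟨h 0 (by simp), fun i hi => h (i + 1) (by simpa using hi)⟩
  · rintro ⟨h0, h⟩ (_ | i) hi
    · exact h0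
    · exact h i (by simpa using hi)

@[simp]
lemma startsWith_append (u v : List α) (x : ℕ → α) :
    StartsWith (u ++ v) x ↔ StartsWith u x ∧ StartsWith v (fun i => x (u.length + i)) := by
  induction u generalizing x with
  | nil => simp
  | cons b u ih => simp [ih, and_assoc, Nat.add_right_comm]

@[simp]
lemma startsWith_replicate (n : ℕ) (b : α) (x : ℕ → α) :
    StartsWith (List.replicate n b) x ↔ ∀ i < n, x i = b := by
  simp [StartsWith]

lemma occursAt_iff (P : List α) (x : ℕ → α) (n : ℕ) :
    occursAt P x n ↔ ∃ k, n = k + P.length ∧ StartsWith P (fun i => x (k + i)) := by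
  constructor
  · rintro ⟨hn, h⟩
    exact ⟨n - P.length, by omega, h⟩
  · rintro ⟨k, rfl, h⟩
    exact ⟨by omega, fun i hi => by simpa using h i hi⟩

lemma hitTime_le_of_occursAt {P : List α} {x : ℕ → α} {n : ℕ}
    (h : occursAt P x n) : hitTime P x ≤ n :=
  sInf_le ⟨n, h, rfl⟩

lemma le_hitTime_of_forall {P : List α} {x : ℕ → α} {c : ℕ}
    (h : ∀ m, occursAt P x m → c ≤ m) : (c : ℝ≥0∞) ≤ hitTime P x :=
  le_sInf <| by
    rintro _ ⟨m, hm, rfl⟩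
    exact Nat.cast_le.mpr (h m hm)

lemma hitTime_lt_hitTime_iff (P Q : List α) (x : ℕ → α) :
    hitTime P x < hitTime Q x ↔ ∃ n, occursAt P x n ∧ ∀ m ≤ n, ¬ occursAt Q x m := by
  constructor
  · intro h
    by_contra! hQ
    refine h.not_ge (le_sInf ?_)
    rintro _ ⟨n, hn, rfl⟩
    obtain ⟨m, hmn, hm⟩ := hQ n hn
    exact (hitTime_le_of_occursAt hm).trans (Nat.cast_le.mpr hmn)
  · rintro ⟨n, hn, hQ⟩
    calc hitTime P x ≤ n := hitTime_le_of_occursAt hn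
      _ < (n + 1 : ℕ) := by exact_mod_cast n.lt_succ_self
      _ ≤ hitTime Q x := le_hitTime_of_forall fun m hm => not_le.mp fun hmn => hQ m hmn hm

end Patterns

lemma exists_TTH_of_TT {x : ℕ → Bool} {i : ℕ} (d : ℕ) (h0 : x i = false)
    (h1 : x (i + 1) = false) (hH : x (i + 2 + d) = true) :
    ∃ j ≤ i + d, x j = false ∧ x (j + 1) = false ∧ x (j + 2) = true := by
  induction d generalizing i with
  | zero => exact ⟨i, le_rfl, h0, h1, hH⟩
  | succ d ih =>
    cases h2 : x (i + 2)
    · obtain ⟨j, hjd, hj⟩ := ih h1 h2 (by rw [← hH]; congr 1; omega)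
      exact ⟨j, by omega, hj⟩
    · exact ⟨i, by omega, h0, h1, h2⟩

def headsThenTH (a : ℕ) : List Bool := List.replicate (a + 1) true ++ [false, true]

lemma startsWith_headsThenTH (a : ℕ) (x : ℕ → Bool) :
    StartsWith (headsThenTH a) x ↔
      (∀ i ≤ a, x i = true) ∧ x (a + 1) = false ∧ x (a + 2) = true := by
  simp [headsThenTH]

lemma HTH_before_TTH_iff (x : ℕ → Bool) :
    (∃ k, (x k = true ∧ x (k + 1) = false ∧ x (k + 2) = true) ∧
        ∀ j ≤ k, ¬ (x j = false ∧ x (j + 1) = false ∧ x (j + 2) = true)) ↔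
      ∃ a, StartsWith (headsThenTH a) x ∨ StartsWith (false :: headsThenTH a) x := by
  simp only [startsWith_cons, startsWith_headsThenTH]
  constructor
  · rintro ⟨k, ⟨-, hk1, hk2⟩, hTTH⟩
    have hTT : ∀ i ≤ k, x i = false → x (i + 1) = false → False := by
      intro i hi h0 h1
      obtain ⟨j, hjk, hj⟩ :=
        exists_TTH_of_TT (k - i) h0 h1 (by rwa [show i + 2 + (k - i) = k + 2 by omega])
      exact hTTH j (by omega) hj
    have hex : ∃ s, x (s + 1) = false := ⟨k, hk1⟩
    obtain ⟨s, hs, hheads⟩ : ∃ s, x (s + 1) = false ∧ ∀ i < s, x (i + 1) = true :=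
      ⟨Nat.find hex, Nat.find_spec hex, fun i hi => by simpa using Nat.find_min hex hi⟩
    have hsk : s ≤ k := not_lt.mp fun hks => by simp [hheads k hks] at hk1
    have hs2 : x (s + 2) = true := by
      rcases hsk.lt_or_eq with hlt | rfl
      · by_contra h
        exact hTT (s + 1) hlt hs (by simpa using h)
      · exact hk2
    cases h0 : x 0
    · obtain ⟨a, rfl⟩ : ∃ a, s = a + 1 :=
        Nat.exists_eq_add_one.mpr (Nat.pos_of_ne_zero fun hs0 => hTT 0 (by omega) h0 (hs0 ▸ hs))
      exact ⟨a, Or.inr ⟨rfl, fun i hi => hheads i (by omega), hs, hs2⟩⟩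
    · refine ⟨s, Or.inl ⟨fun i hi => ?_, hs, hs2⟩⟩
      rcases i with _ | i
      · exact h0
      · exact hheads i (by omega)
  · rintro ⟨a, ⟨hH, hT, hH'⟩ | ⟨h0, hH, hT, hH'⟩⟩
    · refine ⟨a, ⟨hH a le_rfl, hT, hH'⟩, fun j hj hTTH => ?_⟩
      simp [hH j hj] at hTTH
    · refine ⟨a + 1, ⟨hH a le_rfl, hT, hH'⟩, fun j hj hTTH => ?_⟩
      rcases Nat.lt_or_ge j (a + 1) with h | h
      · simp [hH j (by omega)] at hTTH
      · obtain rfl : j = a + 1 := by omega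
        simp [hH a le_rfl] at hTTH

lemma hitTime_HTH_lt_hitTime_TTH_iff (x : ℕ → Bool) :
    hitTime [true, false, true] x < hitTime [false, false, true] x ↔
      ∃ a, StartsWith (headsThenTH a) x ∨ StartsWith (false :: headsThenTH a) x := by
  rw [hitTime_lt_hitTime_iff, ← HTH_before_TTH_iff]
  simp only [occursAt_iff, startsWith_cons, startsWith_nil, List.length_cons, List.length_nil]
  constructor
  · rintro ⟨_, ⟨k, rfl, hk⟩, hTTH⟩
    exact ⟨k, by simpa using hk,
      fun j hj hj' => hTTH (j + 3) (by omega) ⟨j, rfl, by simpa using hj'⟩⟩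
  · rintro ⟨k, hk, hTTH⟩
    refine ⟨k + 3, ⟨k, rfl, by simpa using hk⟩, ?_⟩
    rintro _ hm ⟨j, rfl, hj⟩
    exact hTTH j (by omega) (by simpa using hj)

lemma eq_of_startsWith_headsThenTH {x : ℕ → Bool} {a b : ℕ}
    (ha : StartsWith (headsThenTH a) x) (hb : StartsWith (headsThenTH b) x) : a = b := by
  rw [startsWith_headsThenTH] at ha hb
  by_contra hab
  rcases Nat.lt_or_gt_of_ne hab with h | h
  · simp [hb.1 (a + 1) h] at ha
  · simp [ha.1 (b + 1) h] at hb

lemma not_startsWith_false_cons_of_startsWith_headsThenTH {x : ℕ → Bool} {a b : ℕ}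
    (ha : StartsWith (headsThenTH a) x) : ¬ StartsWith (false :: headsThenTH b) x := by
  rw [startsWith_headsThenTH] at ha
  simp [ha.1 0 (Nat.zero_le a)]

section Cylinders

variable {Ω α : Type*} {X : ℕ → Ω → α}

lemma setOf_startsWith_eq_iInter (w : List α) :
    {ω | StartsWith w (fun i => X i ω)} =
      ⋂ i ∈ (Finset.univ : Finset (Fin w.length)), X i ⁻¹' {w[i]} := by
  ext ω
  simp [StartsWith, Fin.forall_iff]

variable [MeasurableSpace Ω] [MeasurableSpace α] [MeasurableSingletonClass α] {μ : Measure Ω}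

lemma measurableSet_startsWith (hmeas : ∀ i, Measurable (X i)) (w : List α) :
    MeasurableSet {ω | StartsWith w (fun i => X i ω)} := by
  rw [setOf_startsWith_eq_iInter]
  exact Finset.measurableSet_biInter _ fun i _ => hmeas i (measurableSet_singleton _)

lemma measure_startsWith {ν : Measure α} (hmeas : ∀ i, Measurable (X i))
    (hindep : iIndepFun X μ) (hlaw : ∀ i, μ.map (X i) = ν) (w : List α) :
    μ {ω | StartsWith w (fun i => X i ω)} = (w.map fun b => ν {b}).prod := by
  rw [setOf_startsWith_eq_iInter, (hindep.precomp Fin.val_injective).measure_inter_preimage_eq_mul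
    _ fun _ _ => measurableSet_singleton _, ← Fin.prod_univ_fun_getElem]
  refine Finset.prod_congr rfl fun i _ => ?_
  rw [← hlaw i, Measure.map_apply (hmeas i) (measurableSet_singleton _)]
  rfl

end Cylinders

lemma measure_HTH_before_TTH_eq_tsum {Ω : Type*} [MeasurableSpace Ω] (μ : Measure Ω)
    {X : ℕ → Ω → Bool} (hmeas : ∀ n, Measurable (X n)) :
    μ {ω | hitTime [true, false, true] (fun n => X n ω)
        < hitTime [false, false, true] (fun n => X n ω)} =
      ∑' a, μ {ω | StartsWith (headsThenTH a) (fun i => X i ω)} +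
        ∑' a, μ {ω | StartsWith (false :: headsThenTH a) (fun i => X i ω)} := by
  set C := fun a => {ω | StartsWith (headsThenTH a) (fun i => X i ω)}
  set D := fun a => {ω | StartsWith (false :: headsThenTH a) (fun i => X i ω)}
  have hevent : {ω | hitTime [true, false, true] (fun n => X n ω)
      < hitTime [false, false, true] (fun n => X n ω)} = (⋃ a, C a) ∪ ⋃ a, D a := by
    ext ω
    simp only [C, D, Set.mem_ofPred_eq, hitTime_HTH_lt_hitTime_TTH_iff, Set.mem_union,
      Set.mem_iUnion, exists_or]
  have hdisjCD : Disjoint (⋃ a, C a) (⋃ a, D a) := by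
    simp only [Set.disjoint_iUnion_left, Set.disjoint_iUnion_right]
    exact fun a b => Set.disjoint_left.mpr fun ω =>
      not_startsWith_false_cons_of_startsWith_headsThenTH
  have hdisjC : Pairwise (Function.onFun Disjoint C) := fun a b hab =>
    Set.disjoint_left.mpr fun ω ha hb => hab (eq_of_startsWith_headsThenTH ha hb)
  have hdisjD : Pairwise (Function.onFun Disjoint D) := fun a b hab =>
    Set.disjoint_left.mpr fun ω ha hb => hab <|
      eq_of_startsWith_headsThenTH ((startsWith_cons ..).1 ha).2 ((startsWith_cons ..).1 hb).2
  rw [hevent, measure_union hdisjCD (.iUnion fun _ => measurableSet_startsWith hmeas _),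
    measure_iUnion hdisjC fun _ => measurableSet_startsWith hmeas _,
    measure_iUnion hdisjD fun _ => measurableSet_startsWith hmeas _]

theorem measure_HTH_before_TTH {Ω : Type*} [MeasurableSpace Ω] {μ : Measure Ω} {p : ℝ≥0∞}
    (hp1 : p < 1) {X : ℕ → Ω → Bool} (hmeas : ∀ n, Measurable (X n))
    (hindep : iIndepFun X μ) (hlaw : ∀ n, μ.map (X n) = (bernoulliENNReal p hp1.le).toMeasure) :
    μ {ω | hitTime [true, false, true] (fun n => X n ω)
        < hitTime [false, false, true] (fun n => X n ω)} = p ^ 2 + p ^ 2 * (1 - p) := by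
  have hcyl (w : List Bool) :
      μ {ω | StartsWith w (fun i => X i ω)} = (w.map fun b => cond b p (1 - p)).prod := by
    simp [measure_startsWith hmeas hindep hlaw, bernoulliENNReal]
  have hqq : (1 - p) * (1 - p)⁻¹ = 1 :=
    ENNReal.mul_inv_cancel (tsub_pos_of_lt hp1).ne' (ENNReal.sub_ne_top ENNReal.one_ne_top)
  rw [measure_HTH_before_TTH_eq_tsum μ hmeas]
  simp only [hcyl, headsThenTH, List.map_append, List.map_replicate, List.prod_append,
    List.prod_replicate, List.map_cons, List.map_nil, List.prod_cons, List.prod_nil, cond_true,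
    cond_false, mul_one]
  rw [ENNReal.tsum_mul_right, ENNReal.tsum_mul_left, ENNReal.tsum_mul_right,
    ENNReal.tsum_geometric_add_one]
  calc p * (1 - p)⁻¹ * ((1 - p) * p) + (1 - p) * (p * (1 - p)⁻¹ * ((1 - p) * p))
      = ((1 - p) * (1 - p)⁻¹) * (p ^ 2 + p ^ 2 * (1 - p)) := by ring
    _ = p ^ 2 + p ^ 2 * (1 - p) := by rw [hqq, one_mul]

lemma conway_formula_HTH_TTH_eq {p : ℝ≥0∞} (hp0 : 0 < p) (hp1 : p < 1) :
    ((p * (1 - p) ^ 2)⁻¹ - p⁻¹) /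
        (((p ^ 2 * (1 - p))⁻¹ + p⁻¹) - 0 + (p * (1 - p) ^ 2)⁻¹ - p⁻¹)
      = p ^ 2 + p ^ 2 * (1 - p) := by
  have hden : ((p ^ 2 * (1 - p))⁻¹ + p⁻¹) - 0 + (p * (1 - p) ^ 2)⁻¹ - p⁻¹
      = (p ^ 2 * (1 - p))⁻¹ + (p * (1 - p) ^ 2)⁻¹ := by
    rw [tsub_zero, add_right_comm, ENNReal.add_sub_cancel_right (by simpa using hp0.ne')]
  rw [hden]
  obtain ⟨r, hr0, rfl⟩ : ∃ r : ℝ, 0 < r ∧ p = ENNReal.ofReal r :=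
    ⟨p.toReal, ENNReal.toReal_pos hp0.ne' hp1.ne_top, (ENNReal.ofReal_toReal hp1.ne_top).symm⟩
  have hr1 : 0 < 1 - r := by simpa using hp1
  -- `ENNReal.ofReal_sub` needs no order hypothesis, so truncated subtractions move inside
  -- `ENNReal.ofReal` as well.
  rw [← ENNReal.ofReal_one, ← ENNReal.ofReal_sub _ hr0.le]
  simp (disch := positivity) only [← ENNReal.ofReal_pow, ← ENNReal.ofReal_mul,
    ← ENNReal.ofReal_inv_of_pos, ← ENNReal.ofReal_add, ← ENNReal.ofReal_sub,
    ← ENNReal.ofReal_div_of_pos]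
  congr 1
  field_simp
  ring

lemma three_quarters_sq_add_sq_mul_one_sub :
    (3 / 4 : ℝ≥0∞) ^ 2 + (3 / 4) ^ 2 * (1 - 3 / 4) = 45 / 64 := by
  have hofReal (a b : ℕ) (hb : 0 < b) : (a / b : ℝ≥0∞) = ENNReal.ofReal (a / b) := by
    rw [ENNReal.ofReal_div_of_pos (by positivity)]
    simp
  have h34 : (3 / 4 : ℝ≥0∞) = ENNReal.ofReal (3 / 4) := by exact_mod_cast hofReal 3 4 four_pos
  have h4564 : (45 / 64 : ℝ≥0∞) = ENNReal.ofReal (45 / 64) := by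
    exact_mod_cast hofReal 45 64 (by norm_num)
  rw [h34, h4564, ← ENNReal.ofReal_one, ← ENNReal.ofReal_sub _ (by norm_num)]
  simp (disch := positivity) only [← ENNReal.ofReal_pow, ← ENNReal.ofReal_mul,
    ← ENNReal.ofReal_add]
  norm_num

theorem stmt_9_general (p : ℝ≥0∞) (hp0 : 0 < p) (hp1 : p < 1)
    {Ω : Type*} [MeasurableSpace Ω] (μ : Measure Ω)
    (X : ℕ → Ω → Bool) (hmeas : ∀ n, Measurable (X n))
    (hindep : iIndepFun X μ)
    (hlaw : ∀ n, μ.map (X n) = (bernoulliENNReal p hp1.le).toMeasure) :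
    (μ {ω | hitTime [true, false, true] (fun n => X n ω)
          < hitTime [false, false, true] (fun n => X n ω)} =
      ((p * (1 - p) ^ 2)⁻¹ - p⁻¹) /
        (((p ^ 2 * (1 - p))⁻¹ + p⁻¹) - 0 + (p * (1 - p) ^ 2)⁻¹ - p⁻¹)) ∧
    (p = 3/4 →
      μ {ω | hitTime [true, false, true] (fun n => X n ω)
           < hitTime [false, false, true] (fun n => X n ω)} = 45/64) := by
  rw [measure_HTH_before_TTH hp1 hmeas hindep hlaw]
  refine ⟨(conway_formula_HTH_TTH_eq hp0 hp1).symm, ?_⟩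
  rintro rfl
  exact three_quarters_sq_add_sq_mul_one_sub

/-- For a coin with P(H) = p ∈ (0,1) and A = HTH, B = TTH:
P(A before B) = (R_B(B) − R_B(A)) / (R_A(A) − R_A(B) + R_B(B) − R_B(A)), where
R_A(A) = 1/(p²(1−p)) + 1/p, R_A(B) = 0, R_B(B) = 1/(p(1−p)²), R_B(A) = 1/p;
in particular for p = 3/4 this probability is 45/64. -/
theorem stmt_9 (p : ℝ≥0∞) (hp0 : 0 < p) (hp1 : p < 1)
    {Ω : Type*} [MeasurableSpace Ω] (μ : Measure Ω) [IsProbabilityMeasure μ]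
    (X : ℕ → Ω → Bool) (hmeas : ∀ n, Measurable (X n))
    (hindep : iIndepFun X μ)
    (hlaw : ∀ n, μ.map (X n) = (bernoulliENNReal p hp1.le).toMeasure) :
    (μ {ω | hitTime [true, false, true] (fun n => X n ω)
          < hitTime [false, false, true] (fun n => X n ω)} =
      ((p * (1 - p) ^ 2)⁻¹ - p⁻¹) /
        (((p ^ 2 * (1 - p))⁻¹ + p⁻¹) - 0 + (p * (1 - p) ^ 2)⁻¹ - p⁻¹)) ∧
    (p = 3/4 →
      μ {ω | hitTime [true, false, true] (fun n => X n ω)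
           < hitTime [false, false, true] (fun n => X n ω)} = 45/64) :=
  stmt_9_general p hp0 hp1 μ X hmeas hindep hlaw
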